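/- Uhlmann achievability of the fidelity: Let ρ, σ be density matrices on ℂ^n. Then there exist unit vectors ψ, φ ∈ ℂ^(n·n), indexed by Fin n × Fin n, which purify ρ and σ respectively (i.e. ∑_{b} ψ(a,b)·conj(ψ(a',b)) = ρ_{a,a'} and ∑_{b} φ(a,b)·conj(φ(a',b)) = σ_{a,a'} for all a, a'), such that |⟨ψ, φ⟩| = Tr(√(√ρ · σ · √ρ)). -/

import Mathlib

open Matrix
open scoped ComplexOrder

/-- The positive semidefinite square root `U √D U*` (the definition of the older Mathlib). -/
noncomputable def Matrix.PosSemidef.sqrt {n : ℕ} {a : Matrix (Fin n) (Fin n) ℂ} (hA : a.PosSemidef) :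
    Matrix (Fin n) (Fin n) ℂ :=
  (hA.1.eigenvectorUnitary : Matrix (Fin n) (Fin n) ℂ) *
    diagonal (((↑) : ℝ → ℂ) ∘ (√·) ∘ hA.1.eigenvalues) *
    (star (hA.1.eigenvectorUnitary : Matrix (Fin n) (Fin n) ℂ))

/-- `√a * b * √a` is positive semidefinite whenever `a` and `b` are. -/
lemma sqrt_mul_mul_sqrt_posSemidef {n : ℕ} {a b : Matrix (Fin n) (Fin n) ℂ}
    (ha : a.PosSemidef) (hb : b.PosSemidef) :
    (ha.sqrt * b * ha.sqrt).PosSemidef := by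
  have h := hb.mul_mul_conjTranspose_same ha.sqrt
  have hs : ha.sqrtᴴ = ha.sqrt := by
    simp only [Matrix.PosSemidef.sqrt, conjTranspose_mul, diagonal_conjTranspose,
      Matrix.mul_assoc, star_eq_conjTranspose, conjTranspose_conjTranspose]
    congr 2
    ext i j
    simp [diagonal_apply]
  rwa [hs] at h

/-- The fidelity `F(a, b) = Tr(√(√a · b · √a))` of two positive semidefinite matrices. -/
noncomputable def fidelity {n : ℕ} {a b : Matrix (Fin n) (Fin n) ℂ}
    (ha : a.PosSemidef) (hb : b.PosSemidef) : ℝ :=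
  ((sqrt_mul_mul_sqrt_posSemidef ha hb).sqrt.trace).re

/-!
Since `T = √(√ρ σ √ρ)` and `X = √σ √ρ` satisfy `Tᴴ T = Xᴴ X`, the map `T x ↦ X x` is a well-defined
isometry on the range of `T`; extending it to a unitary `U` gives the polar decomposition
`√σ √ρ = U T`, hence `√ρ √σ U = T`. Vectorizing, `ψ(a, b) = √ρ a b` and `φ(a, b) = (√σ U) a b`
purify `ρ` and `σ`, and `⟨ψ, φ⟩ = Tr (√ρ √σ U) = Tr T`, a nonnegative real.
-/

theorem LinearMap.exists_linearIsometry_comp_eq_of_norm_eq {𝕜 E V : Type*} [RCLike 𝕜]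
    [AddCommGroup E] [Module 𝕜 E] [NormedAddCommGroup V] [InnerProductSpace 𝕜 V]
    [FiniteDimensional 𝕜 V] {a p : E →ₗ[𝕜] V} (h : ∀ x, ‖a x‖ = ‖p x‖) :
    ∃ f : V →ₗᵢ[𝕜] V, f.toLinearMap ∘ₗ p = a := by
  have hker : ker p ≤ ker a := fun x hx => by simpa [← norm_eq_zero, h] using hx
  let g : range p →ₗ[𝕜] V := (ker p).liftQ a hker ∘ₗ p.quotKerEquivRange.symm.toLinearMap
  have hg : ∀ x, g ⟨p x, mem_range_self p x⟩ = a x := fun x => by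
    change (ker p).liftQ a hker (p.quotKerEquivRange.symm ⟨p x, mem_range_self p x⟩) = a x
    rw [quotKerEquivRange_symm_apply_image]
    rfl
  let L : range p →ₗᵢ[𝕜] V :=
    { toLinearMap := g
      norm_map' := by
        rintro ⟨_, x, rfl⟩
        exact (hg x).symm ▸ h x }
  exact ⟨L.extend, LinearMap.ext fun x => (L.extend_apply ⟨p x, _⟩).trans (hg x)⟩

namespace Matrix

variable {𝕜 n : Type*} [RCLike 𝕜] [Fintype n] [DecidableEq n]

theorem toEuclideanCLM_symm_mem_unitaryGroup (f : EuclideanSpace 𝕜 n →ₗᵢ[𝕜] EuclideanSpace 𝕜 n) :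
    (toEuclideanCLM (n := n) (𝕜 := 𝕜)).symm f.toContinuousLinearMap ∈ unitaryGroup n 𝕜 := by
  rw [mem_unitaryGroup_iff', ← map_one (toEuclideanCLM (n := n) (𝕜 := 𝕜)).symm,
    ← f.adjoint_comp_self, ← ContinuousLinearMap.star_eq_adjoint, ← ContinuousLinearMap.mul_def,
    map_mul]
  exact congrArg (· * _) ((toEuclideanCLM (n := n) (𝕜 := 𝕜)).symm.map_star' _).symm

theorem norm_toEuclideanCLM_apply_sq (M : Matrix n n 𝕜) (x : EuclideanSpace 𝕜 n) :
    ‖toEuclideanCLM (n := n) (𝕜 := 𝕜) M x‖ ^ 2 =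
      RCLike.re (inner 𝕜 (toEuclideanCLM (n := n) (𝕜 := 𝕜) (Mᴴ * M) x) x) := by
  rw [ContinuousLinearMap.apply_norm_sq_eq_inner_adjoint_left, map_mul, ← star_eq_conjTranspose,
    map_star]
  rfl

theorem exists_mem_unitaryGroup_mul_eq_of_conjTranspose_mul_self_eq {A P : Matrix n n 𝕜}
    (h : Aᴴ * A = Pᴴ * P) : ∃ U ∈ unitaryGroup n 𝕜, A = U * P := by
  have hnorm : ∀ x, ‖toEuclideanLin A x‖ = ‖toEuclideanLin P x‖ := fun x => by
    have := norm_toEuclideanCLM_apply_sq A x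
    rw [h, ← norm_toEuclideanCLM_apply_sq] at this
    exact (sq_eq_sq₀ (norm_nonneg _) (norm_nonneg _)).mp this
  obtain ⟨f, hf⟩ := LinearMap.exists_linearIsometry_comp_eq_of_norm_eq hnorm
  refine ⟨_, toEuclideanCLM_symm_mem_unitaryGroup f,
    EquivLike.injective (toEuclideanCLM (n := n) (𝕜 := 𝕜)) ?_⟩
  ext1 x
  rw [map_mul, StarAlgEquiv.apply_symm_apply]
  exact (LinearMap.congr_fun hf x).symm

end Matrix

section Vectorization

open scoped ComplexConjugate

variable {𝕜 n m : Type*} [RCLike 𝕜] [Fintype m]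

theorem Matrix.sum_toLp_vec_transpose_mul_conj (X : Matrix n m 𝕜) (a a' : n) :
    ∑ b, WithLp.toLp 2 (vec Xᵀ) (a, b) * conj (WithLp.toLp 2 (vec Xᵀ) (a', b)) =
      (X * Xᴴ) a a' := by
  simp [mul_apply, vec]

variable [Fintype n]

theorem Matrix.inner_toLp_vec_transpose (X Y : Matrix n m 𝕜) :
    inner 𝕜 (WithLp.toLp 2 (vec Xᵀ)) (WithLp.toLp 2 (vec Yᵀ)) = (Xᴴ * Y).trace := by
  rw [EuclideanSpace.inner_toLp_toLp, dotProduct_comm, star_vec_dotProduct_vec,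
    conjTranspose_transpose_eq_transpose_conjTranspose, ← transpose_mul, trace_transpose,
    trace_mul_comm]

theorem Matrix.norm_toLp_vec_transpose_eq_one {X : Matrix n m 𝕜} (hX : (X * Xᴴ).trace = 1) :
    ‖WithLp.toLp 2 (vec Xᵀ)‖ = 1 := by
  rw [← pow_eq_one_iff_of_nonneg (norm_nonneg _) two_ne_zero, @norm_sq_eq_re_inner 𝕜,
    inner_toLp_vec_transpose, trace_mul_comm, hX, RCLike.one_re]

end Vectorization

namespace Matrix.PosSemidef

open scoped MatrixOrder

variable {n : ℕ} {a b : Matrix (Fin n) (Fin n) ℂ}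

lemma sqrt_eq_cfcSqrt (ha : a.PosSemidef) : ha.sqrt = CFC.sqrt a := by
  rw [CFC.sqrt_eq_cfc, cfc_nnreal_eq_real _ a, ha.1.cfc_eq]
  simp only [IsHermitian.cfc, Matrix.PosSemidef.sqrt, Unitary.conjStarAlgAut_apply]
  congr 3
  ext i
  simp [max_eq_left (ha.eigenvalues_nonneg i)]

lemma posSemidef_sqrt (ha : a.PosSemidef) : ha.sqrt.PosSemidef :=
  ha.sqrt_eq_cfcSqrt ▸ (CFC.sqrt_nonneg a).posSemidef

lemma sqrt_mul_self (ha : a.PosSemidef) : ha.sqrt * ha.sqrt = a :=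
  ha.sqrt_eq_cfcSqrt ▸ CFC.sqrt_mul_sqrt_self a ha.nonneg

lemma conjTranspose_sqrt (ha : a.PosSemidef) : ha.sqrtᴴ = ha.sqrt :=
  ha.posSemidef_sqrt.isHermitian.eq

theorem exists_mem_unitaryGroup_sqrt_mul_sqrt_mul_eq (ha : a.PosSemidef) (hb : b.PosSemidef) :
    ∃ U ∈ unitaryGroup (Fin n) ℂ,
      ha.sqrt * hb.sqrt * U = (sqrt_mul_mul_sqrt_posSemidef ha hb).sqrt := by
  set T := (sqrt_mul_mul_sqrt_posSemidef ha hb).sqrt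
  have hT : Tᴴ = T := (sqrt_mul_mul_sqrt_posSemidef ha hb).conjTranspose_sqrt
  have hgram : (hb.sqrt * ha.sqrt)ᴴ * (hb.sqrt * ha.sqrt) = Tᴴ * T := by
    rw [hT, sqrt_mul_self, conjTranspose_mul, ha.conjTranspose_sqrt, hb.conjTranspose_sqrt,
      Matrix.mul_assoc, ← Matrix.mul_assoc hb.sqrt, hb.sqrt_mul_self, ← Matrix.mul_assoc]
  obtain ⟨U, hU, hpolar⟩ := exists_mem_unitaryGroup_mul_eq_of_conjTranspose_mul_self_eq hgram
  refine ⟨U, hU, ?_⟩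
  calc ha.sqrt * hb.sqrt * U = (hb.sqrt * ha.sqrt)ᴴ * U := by
        rw [conjTranspose_mul, ha.conjTranspose_sqrt, hb.conjTranspose_sqrt]
    _ = T * (star U * U) := by
        rw [hpolar, conjTranspose_mul, hT, star_eq_conjTranspose, Matrix.mul_assoc]
    _ = T := by rw [(mem_unitaryGroup_iff').mp hU, Matrix.mul_one]

end Matrix.PosSemidef

/-- Uhlmann achievability of the fidelity: any two density matrices `ρ, σ` admit
purifications `ψ, φ` whose overlap achieves the fidelity: `|⟨ψ, φ⟩| = F(ρ, σ)`. -/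
theorem uhlmann_fidelity_achievable {n : ℕ}
    {ρ σ : Matrix (Fin n) (Fin n) ℂ}
    (hρ : ρ.PosSemidef) (hρtr : ρ.trace = 1)
    (hσ : σ.PosSemidef) (hσtr : σ.trace = 1) :
    ∃ ψ φ : EuclideanSpace ℂ (Fin n × Fin n),
      ‖ψ‖ = 1 ∧ ‖φ‖ = 1 ∧
      (∀ a a' : Fin n, ∑ b : Fin n, ψ (a, b) * starRingEnd ℂ (ψ (a', b)) = ρ a a') ∧
      (∀ a a' : Fin n, ∑ b : Fin n, φ (a, b) * starRingEnd ℂ (φ (a', b)) = σ a a') ∧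
      ‖(inner ℂ ψ φ : ℂ)‖ = fidelity hρ hσ := by
  obtain ⟨U, hU, hUT⟩ := hρ.exists_mem_unitaryGroup_sqrt_mul_sqrt_mul_eq hσ
  have hψ : hρ.sqrt * hρ.sqrtᴴ = ρ := by rw [hρ.conjTranspose_sqrt, hρ.sqrt_mul_self]
  have hφ : hσ.sqrt * U * (hσ.sqrt * U)ᴴ = σ := by
    rw [conjTranspose_mul, hσ.conjTranspose_sqrt, Matrix.mul_assoc, ← Matrix.mul_assoc U,
      ← star_eq_conjTranspose, (mem_unitaryGroup_iff).mp hU, Matrix.one_mul, hσ.sqrt_mul_self]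
  refine ⟨WithLp.toLp 2 (vec hρ.sqrtᵀ), WithLp.toLp 2 (vec (hσ.sqrt * U)ᵀ),
    norm_toLp_vec_transpose_eq_one (by rw [hψ, hρtr]),
    norm_toLp_vec_transpose_eq_one (by rw [hφ, hσtr]),
    fun a a' => by rw [sum_toLp_vec_transpose_mul_conj, hψ],
    fun a a' => by rw [sum_toLp_vec_transpose_mul_conj, hφ], ?_⟩
  rw [inner_toLp_vec_transpose, hρ.conjTranspose_sqrt, ← Matrix.mul_assoc, hUT, fidelity]
  exact (Complex.re_eq_norm.mpr (PosSemidef.posSemidef_sqrt _).trace_nonneg).symm
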